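/- arXiv:2409.01815 — 3 statements merged into one kernel-verified Lean document; each statement's English description precedes it below -/
import Mathlib

section
/- In the deterministic service model, the value function is antitone in the deadlines: for all r, t ∈ ℕ and finite multisets M, M' of deadlines, if M and M' are related elementwise by ≤ (i.e., there is a pairing of the elements of M with the elements of M' under which each deadline in M is at most its partner in M', Multiset.Rel (· ≤ ·) M M'), then V(r, t, M') ≤ V(r, t, M). -/
/-!
Any first-period service set `A` for the earlier deadlines `M` is transported along the pairing
to a set `A'` of the same size for the later deadlines `M'`, leaving residual multisets that are
still paired. Since the inconvenience is antitone in the deadline when `η ≥ 1`, the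
first-period cost of `A'` is at most that of `A`, and induction on the horizon bounds the rest.
-/

/-- Inconvenience function: `f η t d = η^(t-d+1)` if the deadline `d` is due
(`d ≤ t`), and `0` otherwise. -/
noncomputable def inconvenience (η : ℝ) (t d : ℕ) : ℝ :=
  if d ≤ t then η ^ (t - d + 1) else 0

/-- Value function of the deterministic service model: over `r` remaining
periods, starting in period `t` with multiset `M` of customer deadlines and
per-period service capacity `m`, the minimal accumulated inconvenience.
`V η m 0 t M = 0` and
`V η m (r+1) t M = min over submultisets A ≤ M with card A ≤ m of
  [∑_{d ∈ M - A} f(t,d) + V η m r (t+1) (M - A)]`. -/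
noncomputable def V (η : ℝ) (m : ℕ) : ℕ → ℕ → Multiset ℕ → ℝ
  | 0, _, _ => 0
  | r + 1, t, M =>
      ⨅ A : {A : Multiset ℕ // A ≤ M ∧ Multiset.card A ≤ m},
        (((M - A.1).map (inconvenience η t)).sum + V η m r (t + 1) (M - A.1))

theorem Multiset.Rel.exists_card_eq_rel_sub {α : Type*} [DecidableEq α] {R : α → α → Prop}
    {M M' : Multiset α} (h : Multiset.Rel R M M') {A : Multiset α} (hA : A ≤ M) :
    ∃ A' ≤ M', Multiset.card A' = Multiset.card A ∧ Multiset.Rel R (M - A) (M' - A') := by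
  induction h generalizing A with
  | zero => exact ⟨0, le_rfl, by simp [Multiset.le_zero.1 hA], by simp⟩
  | @cons a b M M' hab _ ih =>
    by_cases ha : a ∈ A
    · obtain ⟨A', hA'M', hcard, hrel⟩ := ih (by simpa using Multiset.erase_le_erase a hA)
      refine ⟨b ::ₘ A', Multiset.cons_le_cons b hA'M', ?_, ?_⟩
      · rw [Multiset.card_cons, hcard, Multiset.card_erase_add_one ha]
      · rwa [← Multiset.cons_erase ha, Multiset.sub_cons, Multiset.sub_cons,
          Multiset.erase_cons_head, Multiset.erase_cons_head]
    · have hAM : A ≤ M := (Multiset.le_cons_of_notMem ha).1 hA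
      obtain ⟨A', hA'M', hcard, hrel⟩ := ih hAM
      refine ⟨A', hA'M'.trans (Multiset.le_cons_self M' b), hcard, ?_⟩
      rw [Multiset.cons_sub_of_le a hAM, Multiset.cons_sub_of_le b hA'M']
      exact hrel.cons hab

theorem inconvenience_antitone {η : ℝ} (hη : 1 ≤ η) (t : ℕ) : Antitone (inconvenience η t) := by
  intro d d' hdd'
  unfold inconvenience
  split_ifs with hd' hd
  · exact pow_le_pow_right₀ hη (by omega)
  · omega
  · positivity
  · rfl

theorem sum_map_inconvenience_le_of_rel {η : ℝ} (hη : 1 ≤ η) (t : ℕ) {M M' : Multiset ℕ}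
    (h : Multiset.Rel (· ≤ ·) M M') :
    (M'.map (inconvenience η t)).sum ≤ (M.map (inconvenience η t)).sum :=
  Multiset.sum_le_sum_of_rel_le <| Multiset.rel_map.2 <|
    (Multiset.rel_flip.2 h).mono fun _ _ _ _ hdd' => inconvenience_antitone hη t hdd'

instance finite_feasibleServiceSets (M : Multiset ℕ) (m : ℕ) :
    Finite {A : Multiset ℕ // A ≤ M ∧ Multiset.card A ≤ m} :=
  Set.Finite.to_subtype <| M.powerset.toFinset.finite_toSet.subset fun A hA => by
    simpa using hA.1

theorem V_succ_le (η : ℝ) {m : ℕ} (r t : ℕ) {M A : Multiset ℕ} (hAM : A ≤ M)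
    (hA : Multiset.card A ≤ m) :
    V η m (r + 1) t M ≤ ((M - A).map (inconvenience η t)).sum + V η m r (t + 1) (M - A) :=
  ciInf_le (Set.finite_range _).bddBelow (⟨A, hAM, hA⟩ : {A // A ≤ M ∧ Multiset.card A ≤ m})

/-- The value function is antitone in the deadlines: pointwise later deadlines
(related elementwise via `Multiset.Rel (· ≤ ·)`) yield a value at most as
large (Proposition 1). -/
theorem value_antitone_deadlines (η : ℝ) (hη : 1 < η) (m : ℕ)
    (r t : ℕ) (M M' : Multiset ℕ) (h : Multiset.Rel (· ≤ ·) M M') :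
    V η m r t M' ≤ V η m r t M := by
  induction r generalizing t M M' with
  | zero => simp [V]
  | succ r ih =>
    have : Nonempty {A : Multiset ℕ // A ≤ M ∧ Multiset.card A ≤ m} :=
      ⟨⟨0, Multiset.zero_le M, by simp⟩⟩
    refine le_ciInf fun ⟨A, hAM, hA⟩ => ?_
    obtain ⟨A', hA'M', hcard, hrel⟩ := h.exists_card_eq_rel_sub hAM
    calc V η m (r + 1) t M'
        ≤ ((M' - A').map (inconvenience η t)).sum + V η m r (t + 1) (M' - A') :=
          V_succ_le η r t hA'M' (hcard ▸ hA)
      _ ≤ ((M - A).map (inconvenience η t)).sum + V η m r (t + 1) (M - A) :=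
          add_le_add (sum_map_inconvenience_le_of_rel hη.le t hrel) (ih (t + 1) _ _ hrel)
end

section
/- In the deterministic service model, the value function is antitone in the per-period service capacity: for all capacities m ≤ m', all r, t ∈ ℕ and every finite multiset M of deadlines, V_{m'}(r, t, M) ≤ V_{m}(r, t, M), where V_m denotes the value function of the model in which at most m customers may be served per period. -/
lemma inconvenience_nonneg (η : ℝ) (hη : 1 < η) (t d : ℕ) :
    0 ≤ inconvenience η t d := by
  unfold inconvenience
  split
  · positivity
  · exact le_rfl

lemma V_nonneg (η : ℝ) (hη : 1 < η) (m r t : ℕ) (M : Multiset ℕ) :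
    0 ≤ V η m r t M := by
  induction r generalizing t M with
  | zero => simp [V]
  | succ r ih =>
    rw [V]
    refine Real.iInf_nonneg fun A => ?_
    have h1 : 0 ≤ ((M - A.1).map (inconvenience η t)).sum := by
      refine Multiset.sum_nonneg fun x hx => ?_
      obtain ⟨d, _, rfl⟩ := Multiset.mem_map.mp hx
      exact inconvenience_nonneg η hη t d
    linarith [ih (t + 1) (M - A.1)]

/-- The value function is antitone in the per-period service capacity: with
more capacity the minimal accumulated inconvenience can only decrease. -/
theorem value_antitone_capacity (η : ℝ) (hη : 1 < η) (m m' : ℕ) (hmm' : m ≤ m')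
    (r t : ℕ) (M : Multiset ℕ) :
    V η m' r t M ≤ V η m r t M := by
  induction r generalizing t M with
  | zero => simp [V]
  | succ r ih =>
    rw [V, V]
    have hne : ∀ k M₀, Nonempty {A : Multiset ℕ // A ≤ M₀ ∧ Multiset.card A ≤ k} :=
      fun k M₀ => ⟨⟨0, bot_le, by simp⟩⟩
    haveI := hne m M
    refine le_ciInf fun A => ?_
    have hterm : V η m' (r + 1) t M ≤
        ((M - A.1).map (inconvenience η t)).sum + V η m' r (t + 1) (M - A.1) := by
      rw [V]
      refine ciInf_le ?_ (⟨A.1, A.2.1, A.2.2.trans hmm'⟩ :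
        {A : Multiset ℕ // A ≤ M ∧ Multiset.card A ≤ m'})
      refine ⟨0, ?_⟩
      rintro x ⟨B, rfl⟩
      have h1 : 0 ≤ ((M - B.1).map (inconvenience η t)).sum := by
        refine Multiset.sum_nonneg fun x hx => ?_
        obtain ⟨d, _, rfl⟩ := Multiset.mem_map.mp hx
        unfold inconvenience
        split
        · positivity
        · exact le_rfl
      have h2 : 0 ≤ V η m' r (t + 1) (M - B.1) := V_nonneg η hη m' r (t + 1) _
      simpa using add_nonneg h1 h2
    exact hterm.trans (by gcongr; exact ih (t + 1) (M - A.1))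
end

section
/- In the deterministic service model, the value function is nondecreasing in the current period: for all r, t ∈ ℕ and every finite multiset M of deadlines, V(r, t, M) ≤ V(r, t+1, M); that is, postponing the same remaining workload by one period cannot decrease the accumulated inconvenience. -/
/-!
Each stage of `V` is an infimum over the finitely many admissible service sets `A ≤ M`; the same
choice of `A` is admissible in either period, and by induction on the horizon both the immediate
cost and the continuation value can only grow when the clock is advanced, since the per-period
inconvenience `η ^ (t - d + 1)` is monotone in `t` once `1 ≤ η`.
-/

lemma inconvenience_mono {η : ℝ} (hη : 1 ≤ η) (d : ℕ) :
    Monotone fun t => inconvenience η t d := by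
  intro t t' htt'
  simp only [inconvenience]
  split_ifs
  · exact pow_le_pow_right₀ hη (by omega)
  · omega
  · positivity
  · exact le_rfl

instance finite_submultiset_card_le {α : Type*} [DecidableEq α] (M : Multiset α) (m : ℕ) :
    Finite {A : Multiset α // A ≤ M ∧ Multiset.card A ≤ m} :=
  ((Set.finite_Iic M).subset fun _ hA => hA.1).to_subtype

lemma V_mono_period {η : ℝ} (hη : 1 ≤ η) (m r : ℕ) (M : Multiset ℕ) :
    Monotone fun t => V η m r t M := by
  induction r generalizing M with
  | zero => exact fun _ _ _ => le_rfl
  | succ r ih =>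
    intro t t' htt'
    refine ciInf_mono (Finite.bddBelow_range _) fun A => add_le_add ?_ (ih _ (by omega))
    exact Multiset.sum_map_le_sum_map _ _ fun d _ => inconvenience_mono hη d htt'

/-- The value function is nondecreasing in the current period: postponing the
same remaining workload by one period cannot decrease the accumulated
inconvenience. -/
theorem value_mono_period (η : ℝ) (hη : 1 < η) (m : ℕ)
    (r t : ℕ) (M : Multiset ℕ) :
    V η m r t M ≤ V η m r (t + 1) M :=
  V_mono_period hη.le m r M t.le_succ
end
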